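/- arXiv:0910.4460 — 3 statements merged into one kernel-verified Lean document; each statement's English description precedes it below -/
import Mathlib

section
/- Let α_1, …, α_n : I → ℕ be dimension vectors with α = Σ_k α_k, and let W_n ⊆ W_{n−1} ⊆ ⋯ ⊆ W_1 = V_α be a chain of I-graded subspaces such that dim_k (W_k)_i − dim_k (W_{k+1})_i = α_k(i) for all i ∈ I and 1 ≤ k ≤ n (with the convention W_{n+1} = 0). Then the set {x ∈ E_α : every W_k is x-stable} is a k-linear subspace of E_α of dimension Σ_{h∈H} Σ_{1≤k≤l≤n} α_k(s(h)) · α_l(t(h)). (This is the computation, in the proof of Lemma 1.4, of the rank of the vector bundle π : E_{α_1,…,α_n} → Gr(α_n, α_n+α_{n−1}, …, α) whose fiber over a flag is the space of representations compatible with that flag.) -/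
open Module

/-- The space `E_α` of representations of the quiver `(I, H, s, t)` of dimension vector `α`. -/
abbrev Esp (K : Type) [Field K] {I H : Type} (s t : H → I) (α : I → ℕ) : Type :=
  ∀ h : H, (Fin (α (s h)) → K) →ₗ[K] (Fin (α (t h)) → K)

/-!
The set of representations stabilizing the flag is the product, over the arrows, of the spaces
of linear maps `f : V → V'` with `f (W k) ⊆ W' k` for all `k`, where `V = W 0 ⊇ ⋯ ⊇ W n = 0`
has steps of dimensions `a k` and `V' = W' 0 ⊇ W' 1 ⊇ ⋯`. Such a space has dimension
`∑ k, a k * dim (W' k)`, by induction on `n`: restriction to `W 1` maps it onto the analogous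
space for the truncated flags in `W 1` and `W' 1` (extend maps from `W 1` arbitrarily), with
kernel all maps vanishing on `W 1`, of dimension `a 0 * dim V'`. Telescoping,
`dim (W' k) = ∑_{l ≥ k} b l`.
-/

theorem Antitone.apply_succ_le_apply_one {α : Type*} [Preorder α] {n : ℕ} {f : Fin (n + 2) → α}
    (hf : Antitone f) (j : Fin (n + 1)) : f j.succ ≤ f 1 :=
  hf (Fin.succ_le_succ_iff.2 (Fin.zero_le j))

namespace Submodule

variable {K V V' : Type*} [Field K] [AddCommGroup V] [Module K V] [AddCommGroup V'] [Module K V']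

def flagCompatibleMaps {m : ℕ} (W : Fin m → Submodule K V) (W' : Fin m → Submodule K V') :
    Submodule K (V →ₗ[K] V') :=
  ⨅ j, (W j).compatibleMaps (W' j)

theorem mem_flagCompatibleMaps {m : ℕ} {W : Fin m → Submodule K V} {W' : Fin m → Submodule K V'}
    {f : V →ₗ[K] V'} : f ∈ flagCompatibleMaps W W' ↔ ∀ j, (W j).map f ≤ W' j := by
  simp only [flagCompatibleMaps, mem_iInf, map_le_iff_le_comap]
  rfl

def flagTail {n : ℕ} (W : Fin (n + 2) → Submodule K V) : Fin (n + 1) → Submodule K (W 1) :=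
  fun j => (W j.succ).comap (W 1).subtype

theorem finrank_ker_lcomp_subtype [FiniteDimensional K V] [FiniteDimensional K V']
    (p : Submodule K V) :
    finrank K (LinearMap.ker (LinearMap.lcomp K V' p.subtype)) =
      finrank K (V ⧸ p) * finrank K V' := by
  have hsurj : LinearMap.range (LinearMap.lcomp K V' p.subtype) = ⊤ :=
    LinearMap.range_eq_top.2 fun g => LinearMap.exists_extend g
  have hrank := (LinearMap.lcomp K V' p.subtype).finrank_range_add_finrank_ker
  rw [hsurj, finrank_top, finrank_linearMap, finrank_linearMap,
    ← p.finrank_quotient_add_finrank] at hrank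
  linarith [add_mul (finrank K (V ⧸ p)) (finrank K p) (finrank K V')]

section flagTail

variable {n : ℕ} {W : Fin (n + 2) → Submodule K V} {W' : Fin (n + 2) → Submodule K V'}

theorem flagTail_zero : flagTail W 0 = ⊤ := by
  simp [flagTail]

theorem flagTail_last (hBot : W (Fin.last _) = ⊥) : flagTail W (Fin.last n) = ⊥ := by
  simp [flagTail, hBot]

theorem antitone_flagTail (hW : Antitone W) : Antitone (flagTail W) :=
  fun _ _ hij => comap_mono (hW (Fin.succ_le_succ_iff.2 hij))

theorem finrank_flagTail (hW : Antitone W) (j : Fin (n + 1)) :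
    finrank K (flagTail W j) = finrank K (W j.succ) :=
  (comapSubtypeEquivOfLe (hW.apply_succ_le_apply_one j)).finrank_eq

theorem ker_lcomp_le_flagCompatibleMaps (hW : Antitone W) (hTop' : W' 0 = ⊤) :
    LinearMap.ker (LinearMap.lcomp K V' (W 1).subtype) ≤ flagCompatibleMaps W W' := by
  intro f hf
  refine mem_flagCompatibleMaps.2 fun j => ?_
  rcases Fin.eq_zero_or_eq_succ j with rfl | ⟨j, rfl⟩
  · simp [hTop']
  · rintro _ ⟨x, hx, rfl⟩
    have hfx : f x = 0 := LinearMap.congr_fun hf ⟨x, hW.apply_succ_le_apply_one j hx⟩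
    simp [hfx]

theorem map_lcomp_flagCompatibleMaps (hW : Antitone W) (hTop' : W' 0 = ⊤) :
    (flagCompatibleMaps W W').map (LinearMap.lcomp K V' (W 1).subtype) =
      (flagCompatibleMaps (flagTail W) (flagTail W')).map
        (LinearMap.compRight K (W' 1).subtype) := by
  apply le_antisymm
  · rintro _ ⟨f, hf, rfl⟩
    have hf := mem_flagCompatibleMaps.1 hf
    have hf1 : ∀ x ∈ W 1, f x ∈ W' 1 := fun x hx => hf 1 (mem_map_of_mem hx)
    refine ⟨f.restrict hf1, mem_flagCompatibleMaps.2 fun j => ?_, rfl⟩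
    rintro _ ⟨x, hx, rfl⟩
    exact hf j.succ (mem_map_of_mem hx)
  · rintro _ ⟨g, hg, rfl⟩
    obtain ⟨f, hfg⟩ := LinearMap.exists_extend ((W' 1).subtype ∘ₗ g)
    refine ⟨f, mem_flagCompatibleMaps.2 fun j => ?_, hfg⟩
    rcases Fin.eq_zero_or_eq_succ j with rfl | ⟨j, rfl⟩
    · simp [hTop']
    · rintro _ ⟨x, hx, rfl⟩
      have hx1 := hW.apply_succ_le_apply_one j hx
      have hfx : f x = g ⟨x, hx1⟩ := LinearMap.congr_fun hfg ⟨x, hx1⟩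
      rw [hfx]
      exact mem_flagCompatibleMaps.1 hg j
        (mem_map_of_mem (show (⟨x, hx1⟩ : W 1) ∈ flagTail W j from hx))

theorem finrank_flagCompatibleMaps_succ [FiniteDimensional K V] [FiniteDimensional K V']
    (hW : Antitone W) (hTop' : W' 0 = ⊤) :
    finrank K (flagCompatibleMaps W W') =
      finrank K (V ⧸ W 1) * finrank K V' +
        finrank K (flagCompatibleMaps (flagTail W) (flagTail W')) := by
  set C := flagCompatibleMaps W W'
  set P := LinearMap.lcomp K V' (W 1).subtype
  have hrank := (P.domRestrict C).finrank_range_add_finrank_ker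
  rw [LinearMap.range_domRestrict, LinearMap.ker_domRestrict] at hrank
  have hker : finrank K ((LinearMap.ker P).comap C.subtype) = finrank K (LinearMap.ker P) :=
    (comapSubtypeEquivOfLe (ker_lcomp_le_flagCompatibleMaps hW hTop')).finrank_eq
  have hinj : Function.Injective
      (LinearMap.compRight K (W' 1).subtype : (W 1 →ₗ[K] W' 1) →ₗ[K] W 1 →ₗ[K] V') :=
    fun g g' hgg' => LinearMap.ext fun x => Subtype.ext (LinearMap.congr_fun hgg' x)
  have himage :
      finrank K (C.map P) = finrank K (flagCompatibleMaps (flagTail W) (flagTail W')) := by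
    rw [map_lcomp_flagCompatibleMaps hW hTop']
    exact (equivMapOfInjective _ hinj _).finrank_eq.symm
  rw [hker, himage, finrank_ker_lcomp_subtype] at hrank
  omega

end flagTail

theorem finrank_flagCompatibleMaps [FiniteDimensional K V] [FiniteDimensional K V'] {n : ℕ}
    {W : Fin (n + 1) → Submodule K V} {W' : Fin (n + 1) → Submodule K V'} {a : Fin n → ℕ}
    (hW : Antitone W) (hW' : Antitone W') (hTop : W 0 = ⊤) (hBot : W (Fin.last n) = ⊥)
    (hTop' : W' 0 = ⊤)
    (hDim : ∀ j : Fin n, finrank K (W j.castSucc) = a j + finrank K (W j.succ)) :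
    finrank K (flagCompatibleMaps W W') = ∑ j, a j * finrank K (W' j.castSucc) := by
  induction n generalizing V V' with
  | zero =>
    have : Subsingleton V :=
      (subsingleton_iff K).1 (subsingleton_iff_bot_eq_top.1 (hBot.symm.trans hTop))
    simp [finrank_zero_of_subsingleton]
  | succ n ih =>
    have hquot : finrank K (V ⧸ W 1) = a 0 := by
      have h0 := hDim 0
      rw [Fin.castSucc_zero, hTop, finrank_top, ← (W 1).finrank_quotient_add_finrank] at h0
      exact Nat.add_right_cancel h0
    have htail := ih (antitone_flagTail hW) (antitone_flagTail hW') flagTail_zero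
      (flagTail_last hBot) flagTail_zero (a := fun j => a j.succ) fun j => by
        rw [finrank_flagTail hW, finrank_flagTail hW, Fin.succ_castSucc]
        exact hDim j.succ
    rw [finrank_flagCompatibleMaps_succ hW hTop', htail, hquot, Fin.sum_univ_succ,
      ← finrank_top K V', ← hTop']
    simp only [finrank_flagTail hW', Fin.succ_castSucc, Fin.castSucc_zero]
    rfl

theorem finrank_flag_eq_sum {n : ℕ} {W : Fin (n + 1) → Submodule K V} {b : Fin n → ℕ}
    (hBot : W (Fin.last n) = ⊥)
    (hDim : ∀ j : Fin n, finrank K (W j.castSucc) = b j + finrank K (W j.succ))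
    (j : Fin (n + 1)) : finrank K (W j) = ∑ l, if j ≤ l.castSucc then b l else 0 := by
  induction j using Fin.reverseInduction with
  | last =>
    rw [hBot, finrank_bot]
    simp
  | cast i ih =>
    have hsplit : ∀ l : Fin n, (if i.castSucc ≤ l.castSucc then b l else 0) =
        (if i = l then b l else 0) + (if i.succ ≤ l.castSucc then b l else 0) := by
      intro l
      rcases lt_trichotomy i l with hil | rfl | hil
      · simp [hil.le, hil.ne, Fin.succ_le_castSucc_iff.2 hil]
      · simp
      · simp [hil.not_ge, hil.ne', Fin.succ_le_castSucc_iff, hil.le.not_gt]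
    rw [hDim, ih, Finset.sum_congr rfl fun l _ => hsplit l, Finset.sum_add_distrib,
      Finset.sum_ite_eq]
    simp

theorem finrank_pi_univ {ι : Type*} [Fintype ι] {M : ι → Type*} [∀ i, AddCommGroup (M i)]
    [∀ i, Module K (M i)] [∀ i, FiniteDimensional K (M i)] (p : ∀ i, Submodule K (M i)) :
    finrank K (pi Set.univ p) = ∑ i, finrank K (p i) := by
  let e : pi Set.univ p ≃ₗ[K] ∀ i, p i :=
    { toFun f i := ⟨f.1 i, f.2 i (Set.mem_univ i)⟩
      map_add' _ _ := rfl
      map_smul' _ _ := rfl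
      invFun g := ⟨fun i => g i, fun i _ => (g i).2⟩
      left_inv _ := rfl
      right_inv _ := rfl }
  rw [e.finrank_eq, finrank_pi_fintype]

end Submodule

open Submodule in
theorem flag_compatible_reps_dimension_general {K : Type} [Field K] {I H : Type}
    [Fintype H] (s t : H → I) (n : ℕ) (α : Fin n → I → ℕ)
    (W : Fin (n + 1) → ∀ i : I, Submodule K (Fin (∑ j, α j i) → K))
    (hTop : ∀ i, W 0 i = ⊤)
    (hBot : ∀ i, W (Fin.last n) i = ⊥)
    (hChain : ∀ (j : Fin n) (i : I), W j.succ i ≤ W j.castSucc i)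
    (hDim : ∀ (j : Fin n) (i : I),
      finrank K (W j.castSucc i) = α j i + finrank K (W j.succ i)) :
    ∃ S : Submodule K (Esp K s t (fun i => ∑ j, α j i)),
      (S : Set (Esp K s t (fun i => ∑ j, α j i))) =
        {x : Esp K s t (fun i => ∑ j, α j i) |
          ∀ (j : Fin (n + 1)) (h : H), Submodule.map (x h) (W j (s h)) ≤ W j (t h)} ∧
      finrank K S =
        ∑ h : H, ∑ a : Fin n, ∑ b : Fin n,
          if a ≤ b then α a (s h) * α b (t h) else 0 := by
  have hAnti i : Antitone (W · i) := Fin.antitone_iff_succ_le.2 (hChain · i)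
  refine ⟨pi Set.univ fun h => flagCompatibleMaps (W · (s h)) (W · (t h)), ?_, ?_⟩
  · ext x
    simp only [SetLike.mem_coe, mem_pi, Set.mem_univ, forall_true_left, mem_flagCompatibleMaps,
      Set.mem_ofPred_eq]
    exact forall_comm
  · rw [finrank_pi_univ]
    refine Finset.sum_congr rfl fun h _ => ?_
    rw [finrank_flagCompatibleMaps (hAnti _) (hAnti _) (hTop _) (hBot _) (hTop _) (hDim · (s h))]
    simp only [finrank_flag_eq_sum (W := (W · (t h))) (hBot _) (hDim · (t h)),
      Fin.castSucc_le_castSucc_iff, Finset.mul_sum, mul_ite, mul_zero]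

/-- The computation of the rank of the vector bundle `π : E_{α₁,…,αₙ} → Gr(αₙ, …, α)` from
the proof of Lemma 1.4: given a chain of `I`-graded subspaces
`Wₙ ⊆ … ⊆ W₁ = V_α` (with the convention `W_{n+1} = 0`) whose successive subquotients have
dimension vectors `α₁, …, αₙ`, the set of representations `x ∈ E_α` stabilizing every `Wₖ`
is a linear subspace of dimension `∑_{h} ∑_{k ≤ l} αₖ(s h) · α_l(t h)`. -/
theorem flag_compatible_reps_dimension {K : Type} [Field K] {I H : Type}
    [Fintype I] [Fintype H] (s t : H → I) (n : ℕ) (α : Fin n → I → ℕ)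
    (W : Fin (n + 1) → ∀ i : I, Submodule K (Fin (∑ j, α j i) → K))
    (hTop : ∀ i, W 0 i = ⊤)
    (hBot : ∀ i, W (Fin.last n) i = ⊥)
    (hChain : ∀ (j : Fin n) (i : I), W j.succ i ≤ W j.castSucc i)
    (hDim : ∀ (j : Fin n) (i : I),
      finrank K (W j.castSucc i) = α j i + finrank K (W j.succ i)) :
    ∃ S : Submodule K (Esp K s t (fun i => ∑ j, α j i)),
      (S : Set (Esp K s t (fun i => ∑ j, α j i))) =
        {x : Esp K s t (fun i => ∑ j, α j i) |
          ∀ (j : Fin (n + 1)) (h : H), Submodule.map (x h) (W j (s h)) ≤ W j (t h)} ∧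
      finrank K S =
        ∑ h : H, ∑ a : Fin n, ∑ b : Fin n,
          if a ≤ b then α a (s h) * α b (t h) else 0 :=
  flag_compatible_reps_dimension_general s t n α W hTop hBot hChain hDim
end

section
/- Fix dimension vectors α, β : I → ℕ and realize V_{α+β} = V_α ⊕ V_β as I-graded vector spaces; let W = 0 ⊕ V_β. Let F_{α,β} = {x ∈ E_{α+β} : W is x-stable}. Then the k-linear map κ : F_{α,β} → E_α × E_β sending x to (the map induced by x on V_{α+β}/W ≅ V_α, the restriction of x to W ≅ V_β) is surjective, and its kernel has k-dimension Σ_{h∈H} α_{s(h)} β_{t(h)} = Σ_{i∈I} α_i β_i − ⟨α, β⟩. (Section 1.3, equation (E:rankkappa): κ is a vector bundle of rank Σ_h α_{s(h)} β_{t(h)}.) -/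
open Module

/-- The space of representations of dimension vector `α + β` on `V_{α+β} = V_α ⊕ V_β`. -/
abbrev E2 (K : Type) [Field K] {I H : Type} (s t : H → I) (α β : I → ℕ) : Type :=
  ∀ h : H, ((Fin (α (s h)) → K) × (Fin (β (s h)) → K)) →ₗ[K]
    ((Fin (α (t h)) → K) × (Fin (β (t h)) → K))

/-- The Euler form `⟨α, β⟩ = ∑ᵢ αᵢβᵢ − ∑ₕ α_{s(h)} β_{t(h)}` of the quiver. -/
def eulerForm {I H : Type} [Fintype I] [Fintype H] (s t : H → I) (α β : I → ℕ) : ℤ :=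
  (∑ i, (α i : ℤ) * β i) - ∑ h, (α (s h) : ℤ) * β (t h)

/-- The map `κ` sending a representation on `V_α ⊕ V_β` stabilizing `W = 0 ⊕ V_β` to
(the induced map on `V_{α+β}/W ≅ V_α`, the restriction to `W ≅ V_β`). -/
def kappa {K : Type} [Field K] {I H : Type} {s t : H → I} {α β : I → ℕ}
    (x : E2 K s t α β) : Esp K s t α × Esp K s t β :=
  (fun h => LinearMap.fst K _ _ ∘ₗ x h ∘ₗ LinearMap.inl K _ _,
   fun h => LinearMap.snd K _ _ ∘ₗ x h ∘ₗ LinearMap.inr K _ _)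

/-! Write each `x h` as a 2 × 2 block matrix with respect to `V_α ⊕ V_β`. Stability of
`W = 0 ⊕ V_β` says that the upper-right block vanishes, and `κ` reads off the two diagonal blocks.
Block-diagonal maps therefore give a section of `κ`, and its kernel consists of the maps having only
a lower-left block, a space isomorphic to `Π h, Hom(k^{α (s h)}, k^{β (t h)})`. -/

open LinearMap

theorem LinearMap.mem_range_piMap {R ι : Type*} [Semiring R] {φ ψ : ι → Type*}
    [∀ i, AddCommMonoid (φ i)] [∀ i, Module R (φ i)] [∀ i, AddCommMonoid (ψ i)]
    [∀ i, Module R (ψ i)] {f : ∀ i, φ i →ₗ[R] ψ i} {x : ∀ i, ψ i} :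
    x ∈ range (piMap f) ↔ ∀ i, x i ∈ range (f i) := by
  simp only [← SetLike.mem_coe, coe_range, coe_piMap, Set.range_piMap, Set.mem_pi, Set.mem_univ,
    forall_const]

section Blocks

variable {R M₁ M₂ N₁ N₂ : Type*} [CommSemiring R] [AddCommMonoid M₁] [AddCommMonoid M₂]
  [AddCommMonoid N₁] [AddCommMonoid N₂] [Module R M₁] [Module R M₂] [Module R N₁] [Module R N₂]

variable (R M₂ N₁) in
def lowerLeftBlock : (M₁ →ₗ[R] N₂) →ₗ[R] (M₁ × M₂ →ₗ[R] N₁ × N₂) where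
  toFun g := inr R N₁ N₂ ∘ₗ g ∘ₗ fst R M₁ M₂
  map_add' g g' := by ext <;> simp
  map_smul' c g := by ext <;> simp

@[simp]
theorem lowerLeftBlock_apply (g : M₁ →ₗ[R] N₂) (p : M₁ × M₂) :
    lowerLeftBlock R M₂ N₁ g p = (0, g p.1) :=
  rfl

theorem lowerLeftBlock_injective :
    Function.Injective (lowerLeftBlock (M₁ := M₁) (N₂ := N₂) R M₂ N₁) := by
  intro g g' h
  ext a
  simpa using congr(($h (a, 0)).2)

theorem mem_range_lowerLeftBlock_iff (f : M₁ × M₂ →ₗ[R] N₁ × N₂) :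
    f ∈ range (lowerLeftBlock R M₂ N₁) ↔
      (∀ b, (f (0, b)).1 = 0) ∧ fst R N₁ N₂ ∘ₗ f ∘ₗ inl R M₁ M₂ = 0 ∧
        snd R N₁ N₂ ∘ₗ f ∘ₗ inr R M₁ M₂ = 0 := by
  constructor
  · rintro ⟨g, rfl⟩
    refine ⟨fun b => rfl, ?_, ?_⟩ <;> ext <;> simp
  · rintro ⟨hstable, hfst, hsnd⟩
    refine ⟨snd R N₁ N₂ ∘ₗ f ∘ₗ inl R M₁ M₂, ?_⟩
    ext a
    · simpa using (LinearMap.congr_fun hfst a).symm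
    · simp
    · simpa using (hstable a).symm
    · simpa [Prod.mk_zero_zero] using (LinearMap.congr_fun hsnd a).symm

end Blocks

section Quiver

variable {K : Type} [Field K] {I H : Type} (s t : H → I) (α β : I → ℕ)

def stableReps : Submodule K (E2 K s t α β) where
  carrier := {x | ∀ h b, (x h (0, b)).1 = 0}
  add_mem' hx hy h b := by simp [hx h b, hy h b]
  zero_mem' h b := rfl
  smul_mem' c x hx h b := by simp [hx h b]

def lowerLeftReps :
    (∀ h, (Fin (α (s h)) → K) →ₗ[K] (Fin (β (t h)) → K)) →ₗ[K] E2 K s t α β :=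
  piMap fun _ => lowerLeftBlock K _ _

variable {s t α β}

theorem prodMap_mem_stableReps (y : Esp K s t α × Esp K s t β) :
    (fun h => (y.1 h).prodMap (y.2 h)) ∈ stableReps s t α β :=
  fun h b => by simp

theorem kappa_prodMap (y : Esp K s t α × Esp K s t β) :
    kappa (fun h => (y.1 h).prodMap (y.2 h)) = y := by
  ext h a <;> simp [kappa]

theorem kappa_eq_zero_iff (x : E2 K s t α β) :
    kappa x = 0 ↔ ∀ h, fst K _ _ ∘ₗ x h ∘ₗ inl K _ _ = 0 ∧ snd K _ _ ∘ₗ x h ∘ₗ inr K _ _ = 0 := by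
  simp [kappa, Prod.ext_iff, funext_iff, forall_and]

theorem coe_range_lowerLeftReps :
    (range (lowerLeftReps (K := K) s t α β) : Set (E2 K s t α β)) =
      {x | x ∈ stableReps s t α β ∧ kappa x = 0} := by
  ext x
  simp only [SetLike.mem_coe, lowerLeftReps, mem_range_piMap, mem_range_lowerLeftBlock_iff,
    forall_and, Set.mem_ofPred_eq, kappa_eq_zero_iff]
  rfl

theorem finrank_range_lowerLeftReps [Fintype H] :
    finrank K (range (lowerLeftReps (K := K) s t α β)) = ∑ h, α (s h) * β (t h) := by
  rw [finrank_range_of_inj, finrank_pi_fintype]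
  · simp [finrank_linearMap]
  · simpa [lowerLeftReps] using fun _ => lowerLeftBlock_injective

end Quiver

/-- Section 1.3, equation (E:rankkappa): with `F_{α,β} = {x ∈ E_{α+β} : x(W) ⊆ W}` for
`W = 0 ⊕ V_β`, the map `κ : F_{α,β} → E_α × E_β` is surjective and its kernel has dimension
`∑_h α_{s(h)} β_{t(h)} = ∑_i α_i β_i − ⟨α, β⟩`. -/
theorem kappa_surjective_kernel_rank {K : Type} [Field K] {I H : Type}
    [Fintype I] [Fintype H] (s t : H → I) (α β : I → ℕ) :
    ∃ F : Submodule K (E2 K s t α β),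
      (F : Set (E2 K s t α β)) =
        {x : E2 K s t α β | ∀ (h : H) (b : Fin (β (s h)) → K), (x h (0, b)).1 = 0} ∧
      (∀ y : Esp K s t α × Esp K s t β, ∃ x ∈ F, kappa x = y) ∧
      ∃ N : Submodule K (E2 K s t α β),
        (N : Set (E2 K s t α β)) = {x : E2 K s t α β | x ∈ F ∧ kappa x = 0} ∧
        finrank K N = ∑ h, α (s h) * β (t h) ∧
        (∑ h, (α (s h) : ℤ) * β (t h)) = (∑ i, (α i : ℤ) * β i) - eulerForm s t α β := by
  refine ⟨stableReps s t α β, rfl,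
    fun y => ⟨_, prodMap_mem_stableReps y, kappa_prodMap y⟩,
    range (lowerLeftReps s t α β), coe_range_lowerLeftReps, finrank_range_lowerLeftReps, ?_⟩
  rw [eulerForm]
  ring
end

section
/- Let Q be a finite quiver, α : I → ℕ a dimension vector, and x ∈ E_α a representation over k = ℂ. Then the stabilizer Stab_{G_α}(x) = {g ∈ Π_{i∈I} GL(α_i, ℂ) : g_{t(h)} x_h = x_h g_{s(h)} for all h ∈ H} is a path-connected subset of Π_{i∈I} M_{α_i}(ℂ) (with its standard topology). (This is the complex-topology form of Lemma 2.8: the stabilizer of any point of E_α, which is the automorphism group Aut(M_x) of the corresponding representation, is connected; it is the reason why every G_α-equivariant local system on a G_α-orbit is trivial.) -/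
/-!
The stabilizer is the unit group of the linear subspace of intertwiners `g`, which contains `1`.
For such a unit `g`, the complex line `z ↦ 1 + z • (g - 1)` stays among the intertwiners and leaves
the units only at the finitely many `z` with `-z⁻¹` in the spectrum of `g - 1`. The complement of a
finite subset of `ℂ` is path connected, so its image joins `1` to `g` inside the stabilizer.
-/

open Polynomial

theorem spectrum.finite_of_isIntegral {𝕜 A : Type*} [Field 𝕜] [Ring A] [Algebra 𝕜 A] {a : A}
    (ha : IsIntegral 𝕜 a) : (spectrum 𝕜 a).Finite := by
  refine (finite_setOfPred_isRoot (minpoly.ne_zero ha)).subset fun r hr => ?_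
  have hp := spectrum.subset_polynomial_aeval a (minpoly 𝕜 a) ⟨r, hr, rfl⟩
  rw [minpoly.aeval, spectrum.mem_iff, sub_zero] at hp
  by_contra hr0
  exact hp ((Ne.isUnit hr0).map _)

theorem finite_setOf_not_isUnit_one_add_smul {𝕜 A : Type*} [Field 𝕜] [Ring A] [Algebra 𝕜 A]
    {b : A} (hb : IsIntegral 𝕜 b) : {z : 𝕜 | ¬IsUnit (1 + z • b)}.Finite := by
  refine ((spectrum.finite_of_isIntegral hb).image fun r => -r⁻¹).subset fun z hz => ?_
  have hz0 : z ≠ 0 := by rintro rfl; simp at hz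
  refine ⟨-z⁻¹, spectrum.mem_iff.mpr fun hu => hz ?_, by simp⟩
  have hfactor : 1 + z • b = algebraMap 𝕜 A (-z) * (algebraMap 𝕜 A (-z⁻¹) - b) := by
    rw [mul_sub, ← map_mul, neg_mul_neg, mul_inv_cancel₀ hz0, map_one, Algebra.smul_def,
      map_neg, neg_mul, sub_neg_eq_add]
  rw [hfactor]
  exact ((neg_ne_zero.mpr hz0).isUnit.map _).mul hu

theorem Submodule.isPathConnected_setOf_isUnit_and_mem {A : Type*} [Ring A] [Algebra ℂ A]
    [Algebra.IsIntegral ℂ A] [TopologicalSpace A] [ContinuousAdd A] [ContinuousSMul ℂ A]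
    (V : Submodule ℂ A) (hV : 1 ∈ V) : IsPathConnected {a : A | IsUnit a ∧ a ∈ V} := by
  refine ⟨1, ⟨isUnit_one, hV⟩, fun {a} ha => ?_⟩
  set line : ℂ → A := fun z => 1 + z • (a - 1)
  set bad : Set ℂ := {z | ¬IsUnit (line z)}
  have hgood : IsPathConnected badᶜ :=
    (finite_setOf_not_isUnit_one_add_smul (Algebra.IsIntegral.isIntegral _)).countable
      |>.isPathConnected_compl_of_one_lt_rank (by rw [Complex.rank_real_complex]; norm_num)
  have hline : Continuous line := continuous_const.add (continuous_id.smul continuous_const)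
  have himage : line '' badᶜ ⊆ {a : A | IsUnit a ∧ a ∈ V} := by
    rintro _ ⟨z, hz, rfl⟩
    exact ⟨not_not.mp hz, V.add_mem hV (V.smul_mem z (V.sub_mem ha.2 hV))⟩
  have h0 : line 0 = 1 := by simp [line]
  have h1 : line 1 = a := by simp [line]
  refine ((hgood.image hline).joinedIn _ ⟨0, ?_, h0⟩ _ ⟨1, ?_, h1⟩).mono himage
  · simp [bad, h0]
  · simpa [bad, h1] using ha.1

section Intertwiner

variable {R I H : Type*} [CommSemiring R] (s t : H → I) (α : I → ℕ)
  (x : ∀ h : H, Matrix (Fin (α (t h))) (Fin (α (s h))) R)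

def intertwinerSubmodule : Submodule R (∀ i : I, Matrix (Fin (α i)) (Fin (α i)) R) where
  carrier := {g | ∀ h, g (t h) * x h = x h * g (s h)}
  add_mem' hg hg' h := by simp only [Pi.add_apply, Matrix.add_mul, Matrix.mul_add, hg h, hg' h]
  zero_mem' h := by simp
  smul_mem' c g hg h := by simp only [Pi.smul_apply, Matrix.smul_mul, Matrix.mul_smul, hg h]

variable {s t α x} in
@[simp]
theorem mem_intertwinerSubmodule {g : ∀ i : I, Matrix (Fin (α i)) (Fin (α i)) R} :
    g ∈ intertwinerSubmodule s t α x ↔ ∀ h, g (t h) * x h = x h * g (s h) :=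
  Iff.rfl

theorem one_mem_intertwinerSubmodule : 1 ∈ intertwinerSubmodule s t α x := by
  simp only [mem_intertwinerSubmodule, Pi.one_apply, Matrix.one_mul, Matrix.mul_one,
    implies_true]

end Intertwiner

theorem stabilizer_isPathConnected_general {I H : Type} [Fintype I]
    (s t : H → I) (α : I → ℕ)
    (x : ∀ h : H, Matrix (Fin (α (t h))) (Fin (α (s h))) ℂ) :
    IsPathConnected {g : ∀ i : I, Matrix (Fin (α i)) (Fin (α i)) ℂ |
      (∀ i, IsUnit (g i)) ∧ ∀ h, g (t h) * x h = x h * g (s h)} := by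
  simpa only [Pi.isUnit_iff, mem_intertwinerSubmodule] using
    (intertwinerSubmodule s t α x).isPathConnected_setOf_isUnit_and_mem
      (one_mem_intertwinerSubmodule s t α x)

/-- Lemma 2.8 (complex-topology form): for a finite quiver `(I, H, s, t)` and a
representation `x ∈ E_α` over `ℂ`, the stabilizer
`Stab_{G_α}(x) = {g ∈ ∏ᵢ GL(αᵢ, ℂ) : g_{t(h)} x_h = x_h g_{s(h)} ∀ h}` is a path-connected
subset of `∏ᵢ M_{αᵢ}(ℂ)` with its standard topology. -/
theorem stabilizer_isPathConnected {I H : Type} [Fintype I] [Fintype H]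
    (s t : H → I) (α : I → ℕ)
    (x : ∀ h : H, Matrix (Fin (α (t h))) (Fin (α (s h))) ℂ) :
    IsPathConnected {g : ∀ i : I, Matrix (Fin (α i)) (Fin (α i)) ℂ |
      (∀ i, IsUnit (g i)) ∧ ∀ h, g (t h) * x h = x h * g (s h)} :=
  stabilizer_isPathConnected_general s t α x
end
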